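/- arXiv:1608.08597 — 3 statements merged into one kernel-verified Lean document; each statement's English description precedes it below -/
import Mathlib

section
/- Let Q ∈ ℝ^{n×n} and let x be a trajectory of the switched system. Then for every i = 0, …, N, ∫_{τ_i}^{τ_{i+1}} x(t)ᵀ Q x(t) dt = x_iᵀ M_i x_i. -/
/-! On the `i`-th switching interval the trajectory solves `x' = A_i x`, so `t ↦ exp(-t A_i) x(t)`
has zero derivative there and `x(τ_i + η) = exp(η A_i) x_i`; at `η = δ_i` this gives
`x_{i+1} = exp(δ_i A_i) x_i`, hence `x(τ_i) = Φ(i, 0) x_0` by induction. Substituting into the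
integrand turns it into `x_iᵀ (exp(η A_i)ᵀ Q exp(η A_i)) x_i`, and integrating entrywise gives
`x_iᵀ M_i x_i`. -/

open Matrix

/-- Matrix exponential of a real square matrix. -/
noncomputable def expM {n : ℕ} (A : Matrix (Fin n) (Fin n) ℝ) : Matrix (Fin n) (Fin n) ℝ :=
  NormedSpace.exp A

/-- Switching times: `tau δ i = ∑_{j<i} δ j`. -/
noncomputable def tau (δ : ℕ → ℝ) (i : ℕ) : ℝ := ∑ j ∈ Finset.range i, δ j

/-- State transition matrix `Φ(l, i) = exp(δ_{l-1} A_{l-1}) ⋯ exp(δ_i A_i)`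
(ordered product, larger indices on the left; `Φ(i,i) = 1`). -/
noncomputable def Phi {n : ℕ} (A : ℕ → Matrix (Fin n) (Fin n) ℝ) (δ : ℕ → ℝ)
    (l i : ℕ) : Matrix (Fin n) (Fin n) ℝ :=
  (((List.range (l - i)).reverse).map (fun p => expM (δ (i + p) • A (i + p)))).prod

/-- `M_q = ∫_0^{δ_q} exp(η A_q)ᵀ Q exp(η A_q) dη`, taken entrywise. -/
noncomputable def Mmat {n : ℕ} (A : ℕ → Matrix (Fin n) (Fin n) ℝ) (δ : ℕ → ℝ)
    (Q : Matrix (Fin n) (Fin n) ℝ) (q : ℕ) : Matrix (Fin n) (Fin n) ℝ :=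
  Matrix.of fun k l => ∫ η in (0:ℝ)..δ q, ((expM (η • A q))ᵀ * Q * expM (η • A q)) k l

/-- `P_a = ∑_{q=a}^N Φ(q,a)ᵀ M_q Φ(q,a)`. -/
noncomputable def Pmat {n : ℕ} (N : ℕ) (A : ℕ → Matrix (Fin n) (Fin n) ℝ) (δ : ℕ → ℝ)
    (Q : Matrix (Fin n) (Fin n) ℝ) (a : ℕ) : Matrix (Fin n) (Fin n) ℝ :=
  ∑ q ∈ Finset.Icc a N, (Phi A δ q a)ᵀ * Mmat A δ Q q * Phi A δ q a

/-- `F_a = Φ(N+1,a)ᵀ E Φ(N+1,a)`. -/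
noncomputable def Fmat {n : ℕ} (N : ℕ) (A : ℕ → Matrix (Fin n) (Fin n) ℝ) (δ : ℕ → ℝ)
    (E : Matrix (Fin n) (Fin n) ℝ) (a : ℕ) : Matrix (Fin n) (Fin n) ℝ :=
  (Phi A δ (N + 1) a)ᵀ * E * Phi A δ (N + 1) a

/-- `S_a = P_a + F_a`. -/
noncomputable def Smat {n : ℕ} (N : ℕ) (A : ℕ → Matrix (Fin n) (Fin n) ℝ) (δ : ℕ → ℝ)
    (Q E : Matrix (Fin n) (Fin n) ℝ) (a : ℕ) : Matrix (Fin n) (Fin n) ℝ :=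
  Pmat N A δ Q a + Fmat N A δ E a

/-- A trajectory of the switched system: continuous on `[0, τ_{N+1}]`, starting at `x0`,
satisfying `x' = A_i x` on each open interval `(τ_i, τ_{i+1})`. -/
def IsTrajectory {n : ℕ} (N : ℕ) (A : ℕ → Matrix (Fin n) (Fin n) ℝ) (δ : ℕ → ℝ)
    (x0 : Fin n → ℝ) (x : ℝ → Fin n → ℝ) : Prop :=
  ContinuousOn x (Set.Icc 0 (tau δ (N + 1))) ∧ x 0 = x0 ∧
    ∀ i ≤ N, ∀ t ∈ Set.Ioo (tau δ i) (tau δ (i + 1)),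
      HasDerivAt x ((A i).mulVec (x t)) t

open Set

-- Only the topology matters, and every matrix norm induces the product topology.
attribute [local instance] Matrix.linftyOpNormedAddCommGroup Matrix.linftyOpNormedSpace
  Matrix.linftyOpNormedRing Matrix.linftyOpNormedAlgebra

theorem HasDerivAt.matrix_mulVec {m n : Type*} [Fintype m] [Fintype n]
    {B : ℝ → Matrix m n ℝ} {B' : Matrix m n ℝ} {u : ℝ → n → ℝ} {u' : n → ℝ} {t : ℝ}
    (hB : HasDerivAt B B' t) (hu : HasDerivAt u u' t) :
    HasDerivAt (fun t => B t *ᵥ u t) (B t *ᵥ u' + B' *ᵥ u t) t :=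
  let mulVecL : Matrix m n ℝ →L[ℝ] (n → ℝ) →L[ℝ] (m → ℝ) :=
    LinearMap.toContinuousLinearMap
      (LinearMap.toContinuousLinearMap.toLinearMap ∘ₗ mulVecBilin ℝ ℝ)
  mulVecL.hasDerivAt_of_bilinear (fun _ => hB) (fun _ => hu)

theorem eq_of_hasDerivAt_zero_of_continuousOn {E : Type*} [NormedAddCommGroup E]
    [NormedSpace ℝ E] [CompleteSpace E] {f : ℝ → E} {a b : ℝ}
    (hc : ContinuousOn f (Icc a b)) (hd : ∀ t ∈ Ioo a b, HasDerivAt f 0 t) :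
    ∀ t ∈ Icc a b, f t = f a := by
  intro t ht
  have hftc := intervalIntegral.integral_eq_sub_of_hasDerivAt_of_le ht.1
    (hc.mono (Icc_subset_Icc_right ht.2)) (fun s hs => hd s ⟨hs.1, hs.2.trans_le ht.2⟩)
    intervalIntegrable_const
  rw [intervalIntegral.integral_zero] at hftc
  exact (sub_eq_zero.mp hftc.symm)

theorem expM_add_smul {n : ℕ} (A : Matrix (Fin n) (Fin n) ℝ) (s t : ℝ) :
    expM ((s + t) • A) = expM (s • A) * expM (t • A) := by
  rw [expM, expM, expM, add_smul]
  exact NormedSpace.exp_add_of_commute (((Commute.refl A).smul_left s).smul_right t)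

theorem continuous_expM_smul {n : ℕ} (A : Matrix (Fin n) (Fin n) ℝ) :
    Continuous fun t : ℝ => expM (t • A) :=
  NormedSpace.exp_continuous.comp (continuous_id.smul continuous_const)

theorem eq_expM_smul_mulVec_of_hasDerivAt {n : ℕ} (A : Matrix (Fin n) (Fin n) ℝ)
    {x : ℝ → Fin n → ℝ} {a b : ℝ} (hc : ContinuousOn x (Icc a b))
    (hd : ∀ t ∈ Ioo a b, HasDerivAt x (A *ᵥ x t) t) :
    ∀ t ∈ Icc a b, x t = expM ((t - a) • A) *ᵥ x a := by
  set y : ℝ → Fin n → ℝ := fun t => expM (-t • A) *ᵥ x t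
  have hexp : Continuous fun t : ℝ => expM (-t • A) :=
    (continuous_expM_smul A).comp continuous_neg
  have hyc : ContinuousOn y (Icc a b) :=
    (continuous_fst.matrix_mulVec continuous_snd).comp_continuousOn
      (hexp.continuousOn.prodMk hc)
  have hyd : ∀ t ∈ Ioo a b, HasDerivAt y 0 t := by
    intro t ht
    have hE := (hasDerivAt_exp_smul_const A (-t)).scomp t (hasDerivAt_neg t)
    convert hE.matrix_mulVec (hd t ht) using 1
    · rfl
    · rw [neg_one_smul, neg_mulVec, mulVec_mulVec]
      exact (add_neg_cancel _).symm
  intro t ht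
  have hy := eq_of_hasDerivAt_zero_of_continuousOn hyc hyd t ht
  calc x t = expM (t • A) *ᵥ y t := by
        rw [mulVec_mulVec, ← expM_add_smul, add_neg_cancel, zero_smul, expM,
          NormedSpace.exp_zero, one_mulVec]
    _ = expM ((t - a) • A) *ᵥ x a := by
        rw [hy, mulVec_mulVec, ← expM_add_smul, sub_eq_add_neg]

theorem intervalIntegral_dotProduct_mulVec {m n : Type*} [Fintype m] [Fintype n]
    {C : ℝ → Matrix m n ℝ} {a b : ℝ}
    (hC : ∀ k l, IntervalIntegrable (fun η => C η k l) MeasureTheory.volume a b)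
    (w : m → ℝ) (v : n → ℝ) :
    ∫ η in a..b, w ⬝ᵥ C η *ᵥ v = w ⬝ᵥ (of fun k l => ∫ η in a..b, C η k l) *ᵥ v := by
  have hexpand : ∀ M : Matrix m n ℝ, w ⬝ᵥ M *ᵥ v = ∑ k, ∑ l, w k * (M k l * v l) :=
    fun M => by simp [dotProduct, mulVec, Finset.mul_sum]
  have hint : ∀ k l,
      IntervalIntegrable (fun η => w k * (C η k l * v l)) MeasureTheory.volume a b :=
    fun k l => ((hC k l).mul_const _).const_mul _
  simp only [hexpand, of_apply]
  rw [intervalIntegral.integral_finsetSum fun k _ => by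
    simpa only [Finset.sum_fn] using IntervalIntegrable.sum Finset.univ fun l _ => hint k l]
  refine Finset.sum_congr rfl fun k _ => ?_
  rw [intervalIntegral.integral_finsetSum fun l _ => hint k l]
  refine Finset.sum_congr rfl fun l _ => ?_
  rw [intervalIntegral.integral_const_mul, intervalIntegral.integral_mul_const]

theorem mulVec_dotProduct_mulVec_mulVec {m n : Type*} [Fintype m] [Fintype n]
    (B : Matrix m n ℝ) (Q : Matrix m m ℝ) (v : n → ℝ) :
    B *ᵥ v ⬝ᵥ Q *ᵥ (B *ᵥ v) = v ⬝ᵥ (Bᵀ * Q * B) *ᵥ v := by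
  rw [← mulVec_mulVec, ← mulVec_mulVec, dotProduct_mulVec v, vecMul_transpose]

theorem tau_succ (δ : ℕ → ℝ) (i : ℕ) : tau δ (i + 1) = tau δ i + δ i :=
  Finset.sum_range_succ δ i

theorem tau_le_tau {N : ℕ} {δ : ℕ → ℝ} (hδ : ∀ q ≤ N, 0 ≤ δ q) {j k : ℕ}
    (hjk : j ≤ k) (hk : k ≤ N + 1) : tau δ j ≤ tau δ k :=
  Finset.sum_le_sum_of_subset_of_nonneg (Finset.range_subset_range.mpr hjk)
    fun q hq _ => hδ q (by have := Finset.mem_range.mp hq; omega)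

theorem Phi_succ_zero {n : ℕ} (A : ℕ → Matrix (Fin n) (Fin n) ℝ) (δ : ℕ → ℝ) (i : ℕ) :
    Phi A δ (i + 1) 0 = expM (δ i • A i) * Phi A δ i 0 := by
  simp [Phi, List.range_succ]

namespace IsTrajectory

variable {n N : ℕ} {A : ℕ → Matrix (Fin n) (Fin n) ℝ} {δ : ℕ → ℝ} {x0 : Fin n → ℝ}
  {x : ℝ → Fin n → ℝ}

theorem eq_expM_smul_mulVec (hx : IsTrajectory N A δ x0 x) (hδ : ∀ q ≤ N, 0 ≤ δ q)
    {i : ℕ} (hi : i ≤ N) :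
    ∀ t ∈ Icc (tau δ i) (tau δ (i + 1)),
      x t = expM ((t - tau δ i) • A i) *ᵥ x (tau δ i) := by
  have hsub : Icc (tau δ i) (tau δ (i + 1)) ⊆ Icc 0 (tau δ (N + 1)) :=
    Icc_subset_Icc (tau_le_tau hδ (Nat.zero_le i) (by omega))
      (tau_le_tau hδ (by omega) le_rfl)
  exact eq_expM_smul_mulVec_of_hasDerivAt (A i) (hx.1.mono hsub) (hx.2.2 i hi)

theorem apply_tau (hx : IsTrajectory N A δ x0 x) (hδ : ∀ q ≤ N, 0 ≤ δ q) :
    ∀ i ≤ N + 1, x (tau δ i) = Phi A δ i 0 *ᵥ x0 := by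
  intro i
  induction i with
  | zero =>
    intro _
    simp [tau, Phi, hx.2.1]
  | succ i ih =>
    intro hi
    have hend : tau δ (i + 1) ∈ Icc (tau δ i) (tau δ (i + 1)) :=
      ⟨tau_le_tau hδ (Nat.le_succ i) hi, le_rfl⟩
    rw [hx.eq_expM_smul_mulVec hδ (by omega) _ hend, ih (by omega), Phi_succ_zero,
      ← mulVec_mulVec, tau_succ, add_sub_cancel_left]

end IsTrajectory

/-- `∫_{τ_i}^{τ_{i+1}} x(t)ᵀ Q x(t) dt = x_iᵀ M_i x_i` for every `i = 0, …, N`. -/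
theorem stmt1 {n N : ℕ} (A : ℕ → Matrix (Fin n) (Fin n) ℝ) (δ : ℕ → ℝ)
    (hδ : ∀ q ≤ N, 0 ≤ δ q) (Q : Matrix (Fin n) (Fin n) ℝ)
    (x0 : Fin n → ℝ) (x : ℝ → Fin n → ℝ) (hx : IsTrajectory N A δ x0 x) :
    ∀ i ≤ N,
      (∫ t in tau δ i..tau δ (i + 1), x t ⬝ᵥ Q.mulVec (x t)) =
        ((Phi A δ i 0).mulVec x0) ⬝ᵥ (Mmat A δ Q i).mulVec ((Phi A δ i 0).mulVec x0) := by
  intro i hi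
  set a := tau δ i
  have hC : Continuous fun η : ℝ => (expM (η • A i))ᵀ * Q * expM (η • A i) :=
    ((continuous_expM_smul (A i)).matrix_transpose.matrix_mul continuous_const).matrix_mul
      (continuous_expM_smul (A i))
  rw [← hx.apply_tau hδ i (by omega)]
  calc (∫ t in a..tau δ (i + 1), x t ⬝ᵥ Q *ᵥ x t)
      = ∫ η in (0 : ℝ)..δ i, x (a + η) ⬝ᵥ Q *ᵥ x (a + η) := by
        rw [intervalIntegral.integral_comp_add_left (fun t => x t ⬝ᵥ Q *ᵥ x t), add_zero,
          tau_succ]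
    _ = ∫ η in (0 : ℝ)..δ i,
          x a ⬝ᵥ ((expM (η • A i))ᵀ * Q * expM (η • A i)) *ᵥ x a := by
        refine intervalIntegral.integral_congr fun η hη => ?_
        rw [uIcc_of_le (hδ i hi)] at hη
        have hη' : a + η ∈ Icc a (tau δ (i + 1)) := by
          rw [tau_succ]
          exact ⟨by linarith [hη.1], by linarith [hη.2]⟩
        rw [hx.eq_expM_smul_mulVec hδ hi _ hη', add_sub_cancel_left,
          mulVec_dotProduct_mulVec_mulVec]
    _ = x a ⬝ᵥ Mmat A δ Q i *ᵥ x a :=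
        intervalIntegral_dotProduct_mulVec
          (fun k l => ((hC.matrix_elem k l).intervalIntegrable _ _)) _ _
end

section
/- (Lemma 2, derivative of the matrices S_a.) Fix Q, E ∈ ℝ^{n×n} and indices 0 ≤ a ≤ i ≤ N, and regard S_a as a function of δ ∈ ℝ^{N+1} through the defining formulas (so that Φ and each M_q depend on δ). Then the partial derivative of S_a with respect to δ_i exists at every δ with nonnegative entries and equals Φ(i+1, a)ᵀ C_i Φ(i+1, a), where C_i = Q + A_iᵀ S_{i+1} + S_{i+1} A_i and Φ(i+1, a), S_{i+1} are evaluated at δ. -/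
open Matrix

/-!
Splitting the sum defining `S_a` at `i` gives
`S_a = ∑_{a ≤ q < i} Φ(q,a)ᵀ M_q Φ(q,a) + Φ(i,a)ᵀ(M_i + (e^{δ_i A_i})ᵀ S_{i+1} e^{δ_i A_i})Φ(i,a)`
in which only `M_i` and the two exponentials depend on `δ_i`. The fundamental theorem of calculus
gives `∂M_i/∂δ_i = (e^{δ_i A_i})ᵀ Q e^{δ_i A_i}`, the product rule differentiates the exponential
sandwich, and `Φ(i+1,a) = e^{δ_i A_i} Φ(i,a)` folds the sum into `Φ(i+1,a)ᵀ C_i Φ(i+1,a)`.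
-/

section TransitionMatrix

variable {n : ℕ} (A : ℕ → Matrix (Fin n) (Fin n) ℝ)

lemma Phi_self (δ : ℕ → ℝ) (i : ℕ) : Phi A δ i i = 1 := by
  simp [Phi]

lemma Phi_succ_self (δ : ℕ → ℝ) (i : ℕ) : Phi A δ (i + 1) i = expM (δ i • A i) := by
  simp [Phi]

lemma Phi_mul_Phi (δ : ℕ → ℝ) {a m l : ℕ} (ham : a ≤ m) (hml : m ≤ l) :
    Phi A δ l m * Phi A δ m a = Phi A δ l a := by
  unfold Phi
  rw [show l - a = (m - a) + (l - m) by omega, List.range_add, List.reverse_append,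
    List.map_append, List.prod_append]
  simp only [List.map_reverse, List.map_map]
  congr 3
  refine List.map_congr_left fun p _ => ?_
  simp only [Function.comp_apply, show a + (m - a + p) = m + p by omega]

lemma Phi_congr {δ δ' : ℕ → ℝ} {a l : ℕ} (h : ∀ p, a ≤ p → p < l → δ p = δ' p) :
    Phi A δ l a = Phi A δ' l a := by
  unfold Phi
  congr 1
  refine List.map_congr_left fun p hp => ?_
  rw [List.mem_reverse, List.mem_range] at hp
  rw [h (a + p) (Nat.le_add_right _ _) (by omega)]

end TransitionMatrix

section CostMatrices

variable {n N : ℕ} (A : ℕ → Matrix (Fin n) (Fin n) ℝ) (δ : ℕ → ℝ) (Q E : Matrix (Fin n) (Fin n) ℝ)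

lemma Smat_congr {δ' : ℕ → ℝ} {b : ℕ} (h : ∀ p, b ≤ p → p ≤ N → δ p = δ' p) :
    Smat N A δ Q E b = Smat N A δ' Q E b := by
  have hPhi : ∀ q ≤ N + 1, Phi A δ q b = Phi A δ' q b := fun q hq =>
    Phi_congr A fun p hbp hpq => h p hbp (by omega)
  simp only [Smat, Pmat, Fmat, Mmat]
  congr 1
  · refine Finset.sum_congr rfl fun q hq => ?_
    obtain ⟨hbq, hqN⟩ := Finset.mem_Icc.1 hq
    rw [hPhi q (by omega), h q hbq hqN]
  · rw [hPhi (N + 1) le_rfl]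

lemma Pmat_eq_sum_add_conj {a i : ℕ} (hai : a ≤ i) (hiN : i ≤ N + 1) :
    Pmat N A δ Q a = ∑ q ∈ Finset.Ico a i, (Phi A δ q a)ᵀ * Mmat A δ Q q * Phi A δ q a
      + (Phi A δ i a)ᵀ * Pmat N A δ Q i * Phi A δ i a := by
  simp only [Pmat, ← Finset.Ico_add_one_right_eq_Icc, Finset.mul_sum, Finset.sum_mul]
  rw [← Finset.sum_Ico_consecutive _ hai hiN]
  congr 1
  refine Finset.sum_congr rfl fun q hq => ?_
  rw [← Phi_mul_Phi A δ hai (Finset.mem_Ico.1 hq).1, transpose_mul]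
  simp only [mul_assoc]

lemma Fmat_eq_conj {a i : ℕ} (hai : a ≤ i) (hiN : i ≤ N + 1) :
    Fmat N A δ E a = (Phi A δ i a)ᵀ * Fmat N A δ E i * Phi A δ i a := by
  simp only [Fmat, ← Phi_mul_Phi A δ hai hiN, transpose_mul, mul_assoc]

lemma Smat_eq_sum_add_conj {a i : ℕ} (hai : a ≤ i) (hiN : i ≤ N + 1) :
    Smat N A δ Q E a = ∑ q ∈ Finset.Ico a i, (Phi A δ q a)ᵀ * Mmat A δ Q q * Phi A δ q a
      + (Phi A δ i a)ᵀ * Smat N A δ Q E i * Phi A δ i a := by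
  rw [Smat, Smat, Pmat_eq_sum_add_conj A δ Q hai hiN, Fmat_eq_conj A δ E hai hiN]
  simp only [mul_add, add_mul, add_assoc]

lemma Smat_eq_Mmat_add_conj {i : ℕ} (hiN : i ≤ N) :
    Smat N A δ Q E i = Mmat A δ Q i
      + (expM (δ i • A i))ᵀ * Smat N A δ Q E (i + 1) * expM (δ i • A i) := by
  rw [Smat_eq_sum_add_conj A δ Q E (Nat.le_succ i) (by omega), Phi_succ_self]
  simp [Phi_self]

end CostMatrices

section Derivatives

-- `HasDerivAt` depends only on the topology, which is the product topology for this norm too,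
-- so `hasDerivAt_pi` still passes between matrices and their entries.
attribute [local instance] Matrix.linftyOpNormedRing Matrix.linftyOpNormedAlgebra

variable {n N : ℕ} (A : ℕ → Matrix (Fin n) (Fin n) ℝ) (δ : ℕ → ℝ) (Q E : Matrix (Fin n) (Fin n) ℝ)

lemma hasDerivAt_expM_smul (B : Matrix (Fin n) (Fin n) ℝ) (t : ℝ) :
    HasDerivAt (fun s : ℝ => expM (s • B)) (B * expM (t • B)) t :=
  hasDerivAt_exp_smul_const' B t

lemma hasDerivAt_expM_smul_conj (B X : Matrix (Fin n) (Fin n) ℝ) (t : ℝ) :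
    HasDerivAt (fun s : ℝ => (expM (s • B))ᵀ * X * expM (s • B))
      ((expM (t • B))ᵀ * (Bᵀ * X + X * B) * expM (t • B)) t := by
  have hT : HasDerivAt (fun s : ℝ => (expM (s • B))ᵀ) ((expM (t • B))ᵀ * Bᵀ) t := by
    simp only [expM, ← Matrix.exp_transpose, transpose_smul]
    exact hasDerivAt_exp_smul_const Bᵀ t
  refine ((hT.mul_const X).mul (hasDerivAt_expM_smul B t)).congr_deriv ?_
  simp only [mul_add, add_mul, mul_assoc]

lemma hasDerivAt_Mmat_update (i : ℕ) (t : ℝ) :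
    HasDerivAt (fun s : ℝ => Mmat A (Function.update δ i s) Q i)
      ((expM (t • A i))ᵀ * Q * expM (t • A i)) t := by
  have hcont : Continuous fun η : ℝ => (expM (η • A i))ᵀ * Q * expM (η • A i) :=
    continuous_iff_continuousAt.2 fun η => (hasDerivAt_expM_smul_conj (A i) Q η).continuousAt
  refine hasDerivAt_pi.2 fun k => hasDerivAt_pi.2 fun l => ?_
  have hkl : Continuous fun η : ℝ => ((expM (η • A i))ᵀ * Q * expM (η • A i)) k l :=
    (continuous_apply_apply k l).comp hcont
  simpa only [Mmat, of_apply, Function.update_self] using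
    intervalIntegral.integral_hasDerivAt_right (hkl.intervalIntegrable _ _)
      (hkl.stronglyMeasurableAtFilter _ _) hkl.continuousAt

lemma Smat_update_eq {a i : ℕ} (hai : a ≤ i) (hiN : i ≤ N) (s : ℝ) :
    Smat N A (Function.update δ i s) Q E a
      = ∑ q ∈ Finset.Ico a i, (Phi A δ q a)ᵀ * Mmat A δ Q q * Phi A δ q a
        + (Phi A δ i a)ᵀ * (Mmat A (Function.update δ i s) Q i
            + (expM (s • A i))ᵀ * Smat N A δ Q E (i + 1) * expM (s • A i)) * Phi A δ i a := by
  have hne : ∀ p, p ≠ i → Function.update δ i s p = δ p := fun p hp =>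
    Function.update_of_ne hp _ _
  have hPhi : ∀ q ≤ i, Phi A (Function.update δ i s) q a = Phi A δ q a := fun q hq =>
    Phi_congr A fun p _ hpq => hne p (by omega)
  rw [Smat_eq_sum_add_conj A _ Q E hai (by omega), Smat_eq_Mmat_add_conj A _ Q E hiN,
    Smat_congr A _ Q E (δ' := δ) fun p hp _ => hne p (by omega), Function.update_self,
    hPhi i le_rfl]
  congr 1
  refine Finset.sum_congr rfl fun q hq => ?_
  have hqi := (Finset.mem_Ico.1 hq).2
  simp only [hPhi q hqi.le, Mmat, hne q hqi.ne]

lemma hasDerivAt_Smat_update {a i : ℕ} (hai : a ≤ i) (hiN : i ≤ N) :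
    HasDerivAt (fun s : ℝ => Smat N A (Function.update δ i s) Q E a)
      ((Phi A δ (i + 1) a)ᵀ *
          (Q + (A i)ᵀ * Smat N A δ Q E (i + 1) + Smat N A δ Q E (i + 1) * A i) *
          Phi A δ (i + 1) a) (δ i) := by
  set S := Smat N A δ Q E (i + 1)
  have hmid := (hasDerivAt_Mmat_update A δ Q i (δ i)).add
    (hasDerivAt_expM_smul_conj (A i) S (δ i))
  rw [funext (Smat_update_eq A δ Q E hai hiN)]
  refine (((hmid.const_mul _).mul_const _).const_add _).congr_deriv ?_
  rw [← Phi_mul_Phi A δ hai (Nat.le_succ i), Phi_succ_self, transpose_mul]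
  simp only [mul_add, add_mul, mul_assoc, add_assoc]

end Derivatives

theorem stmt6_general {n N : ℕ} (A : ℕ → Matrix (Fin n) (Fin n) ℝ) (δ : ℕ → ℝ)
    (Q E : Matrix (Fin n) (Fin n) ℝ)
    (a i : ℕ) (hai : a ≤ i) (hiN : i ≤ N) :
    ∀ k l : Fin n,
      HasDerivAt (fun s : ℝ => Smat N A (Function.update δ i s) Q E a k l)
        (((Phi A δ (i + 1) a)ᵀ *
            (Q + (A i)ᵀ * Smat N A δ Q E (i + 1) + Smat N A δ Q E (i + 1) * A i) *
            Phi A δ (i + 1) a) k l) (δ i) := fun k l =>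
  hasDerivAt_pi.1 (hasDerivAt_pi.1 (hasDerivAt_Smat_update A δ Q E hai hiN) k) l

/-- Lemma 2: the partial derivative of `S_a` with respect to `δ_i` exists
(entrywise) at every nonnegative `δ` and equals `Φ(i+1,a)ᵀ C_i Φ(i+1,a)` with
`C_i = Q + A_iᵀ S_{i+1} + S_{i+1} A_i`. -/
theorem stmt6 {n N : ℕ} (A : ℕ → Matrix (Fin n) (Fin n) ℝ) (δ : ℕ → ℝ)
    (hδ : ∀ q ≤ N, 0 ≤ δ q) (Q E : Matrix (Fin n) (Fin n) ℝ)
    (a i : ℕ) (hai : a ≤ i) (hiN : i ≤ N) :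
    ∀ k l : Fin n,
      HasDerivAt (fun s : ℝ => Smat N A (Function.update δ i s) Q E a k l)
        (((Phi A δ (i + 1) a)ᵀ *
            (Q + (A i)ᵀ * Smat N A δ Q E (i + 1) + Smat N A δ Q E (i + 1) * A i) *
            Phi A δ (i + 1) a) k l) (δ i) :=
  stmt6_general A δ Q E a i hai hiN
end

section
/- (Block matrix exponential identity used in the algorithm, Eq. (26)–(29).) Let A, Q ∈ ℝ^{n×n} and δ ∈ ℝ with δ ≥ 0. Let G be the 2n×2n block matrix G = [[−Aᵀ, Q], [0, A]] and write Z = exp(δ G) in n×n blocks as Z = [[Z₁, Z₂], [Z₂₁, Z₃]]. Then Z₂₁ = 0, Z₁ = exp(−δ Aᵀ), Z₃ = exp(δ A), and Z₃ᵀ Z₂ = ∫_0^δ exp(η A)ᵀ Q exp(η A) dη. -/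
open Matrix

/-! The series of `exp (δ • G)` shows that it is block upper triangular with diagonal blocks
`exp (-δ • Aᵀ)` and `exp (δ • A)`, because every power of `G` is. For the corner block (Van Loan's
trick), `s ↦ exp (s • Aᵀ) * (exp (s • G))₁₂` vanishes at `0` and has derivative
`exp (s • Aᵀ) * Q * exp (s • A)`: differentiating `(exp (s • G))₁₂` produces
`-Aᵀ * (exp (s • G))₁₂ + Q * exp (s • A)`, whose first term cancels against the derivative of
`exp (s • Aᵀ)`. -/

open NormedSpace
open scoped Nat

section

variable {m n : Type*} [Fintype m] [Fintype n] [DecidableEq m] [DecidableEq n]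

theorem Matrix.fromBlocks_zero₂₁_pow {R : Type*} [Semiring R] (B : Matrix m m R)
    (C : Matrix m n R) (D : Matrix n n R) (k : ℕ) :
    ∃ X, fromBlocks B C 0 D ^ k = fromBlocks (B ^ k) X 0 (D ^ k) := by
  induction k with
  | zero => exact ⟨0, by simp [← fromBlocks_one]⟩
  | succ k ih =>
    obtain ⟨X, hX⟩ := ih
    exact ⟨B ^ k * C + X * D, by simp [pow_succ, hX, fromBlocks_multiply]⟩

theorem Matrix.exp_apply_eq_tsum (M : Matrix m m ℝ) (i j : m) :
    exp M i j = ∑' k : ℕ, (k !⁻¹ : ℝ) * (M ^ k) i j := by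
  -- Matrices carry no global norm; any submultiplicative one makes the exponential series converge.
  let _ : NormedRing (Matrix m m ℝ) := Matrix.linftyOpNormedRing
  let _ : NormedAlgebra ℝ (Matrix m m ℝ) := Matrix.linftyOpNormedAlgebra
  rw [exp_eq_tsum ℝ]
  exact (entryLinearMap ℝ ℝ i j).toContinuousLinearMap.map_tsum (expSeries_summable' M)

theorem Matrix.exp_fromBlocks_zero₂₁ (B : Matrix m m ℝ) (C : Matrix m n ℝ) (D : Matrix n n ℝ) :
    ∃ X, exp (fromBlocks B C 0 D) = fromBlocks (exp B) X 0 (exp D) := by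
  choose X hX using fromBlocks_zero₂₁_pow B C D
  refine ⟨(exp (fromBlocks B C 0 D)).toBlocks₁₂, ?_⟩
  ext (i | i) (j | j)
  · simp [exp_apply_eq_tsum, hX]
  · rfl
  · simp [exp_apply_eq_tsum, hX]
  · simp [exp_apply_eq_tsum, hX]

theorem Matrix.continuous_exp_smul (B : Matrix m m ℝ) : Continuous fun s : ℝ => exp (s • B) := by
  let _ : NormedRing (Matrix m m ℝ) := Matrix.linftyOpNormedRing
  let _ : NormedAlgebra ℝ (Matrix m m ℝ) := Matrix.linftyOpNormedAlgebra
  exact continuous_iff_continuousAt.2 fun t => (hasDerivAt_exp_smul_const B t).continuousAt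

theorem Matrix.hasDerivAt_exp_neg_smul_mul_toBlocks₁₂ (B C D : Matrix m m ℝ) (i j : m) (t : ℝ) :
    HasDerivAt (fun s : ℝ => (exp ((-s) • B) * (exp (s • fromBlocks B C 0 D)).toBlocks₁₂) i j)
      ((exp ((-t) • B) * C * exp (t • D)) i j) t := by
  let _ : NormedRing (Matrix m m ℝ) := Matrix.linftyOpNormedRing
  let _ : NormedAlgebra ℝ (Matrix m m ℝ) := Matrix.linftyOpNormedAlgebra
  let _ : NormedRing (Matrix (m ⊕ m) (m ⊕ m) ℝ) := Matrix.linftyOpNormedRing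
  let _ : NormedAlgebra ℝ (Matrix (m ⊕ m) (m ⊕ m) ℝ) := Matrix.linftyOpNormedAlgebra
  set G := fromBlocks B C 0 D with hG
  let toBlocks₁₂L : Matrix (m ⊕ m) (m ⊕ m) ℝ →L[ℝ] Matrix m m ℝ := LinearMap.toContinuousLinearMap
    { toFun := toBlocks₁₂, map_add' := fun _ _ => rfl, map_smul' := fun _ _ => rfl }
  have hE := hasDerivAt_exp_smul_const (-B) t
  simp only [smul_neg, ← neg_smul] at hE
  have hY := toBlocks₁₂L.hasFDerivAt.comp_hasDerivAt t (hasDerivAt_exp_smul_const' G t)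
  have hGY : (G * exp (t • G)).toBlocks₁₂ = B * (exp (t • G)).toBlocks₁₂ + C * exp (t • D) := by
    obtain ⟨X, hX⟩ := exp_fromBlocks_zero₂₁ (t • B) (t • C) (t • D)
    rw [hG, fromBlocks_smul, smul_zero, hX, fromBlocks_multiply]
    simp
  have hval : exp ((-t) • B) * -B * (exp (t • G)).toBlocks₁₂ +
      exp ((-t) • B) * (G * exp (t • G)).toBlocks₁₂ = exp ((-t) • B) * C * exp (t • D) := by
    rw [hGY]
    noncomm_ring
  exact ((entryLinearMap ℝ ℝ i j).toContinuousLinearMap.hasFDerivAt.comp_hasDerivAt t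
    (hE.mul hY)).congr_deriv (congrArg (fun M => M i j) hval)

theorem Matrix.exp_neg_smul_mul_toBlocks₁₂_exp_smul_fromBlocks (B C D : Matrix m m ℝ) (δ : ℝ) :
    exp ((-δ) • B) * (exp (δ • fromBlocks B C 0 D)).toBlocks₁₂ =
      of fun i j => ∫ η in (0 : ℝ)..δ, (exp ((-η) • B) * C * exp (η • D)) i j := by
  ext i j
  have hcont : Continuous fun η : ℝ => (exp ((-η) • B) * C * exp (η • D)) i j :=
    ((((continuous_exp_smul B).comp continuous_neg).matrix_mul continuous_const).matrix_mul
      (continuous_exp_smul D)).matrix_elem i j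
  rw [of_apply, intervalIntegral.integral_eq_sub_of_hasDerivAt
    (fun t _ => hasDerivAt_exp_neg_smul_mul_toBlocks₁₂ B C D i j t) (hcont.intervalIntegrable _ _)]
  simp [← fromBlocks_one]

end

theorem stmt12_general {n : ℕ} (A Q : Matrix (Fin n) (Fin n) ℝ) (δ : ℝ) :
    (NormedSpace.exp (δ • Matrix.fromBlocks (-Aᵀ) Q 0 A)).toBlocks₂₁ = 0 ∧
    (NormedSpace.exp (δ • Matrix.fromBlocks (-Aᵀ) Q 0 A)).toBlocks₁₁ = expM ((-δ) • Aᵀ) ∧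
    (NormedSpace.exp (δ • Matrix.fromBlocks (-Aᵀ) Q 0 A)).toBlocks₂₂ = expM (δ • A) ∧
    ((NormedSpace.exp (δ • Matrix.fromBlocks (-Aᵀ) Q 0 A)).toBlocks₂₂)ᵀ *
        (NormedSpace.exp (δ • Matrix.fromBlocks (-Aᵀ) Q 0 A)).toBlocks₁₂ =
      Matrix.of fun k l => ∫ η in (0:ℝ)..δ, ((expM (η • A))ᵀ * Q * expM (η • A)) k l := by
  have hG : δ • fromBlocks (-Aᵀ) Q 0 A = fromBlocks (δ • -Aᵀ) (δ • Q) 0 (δ • A) := by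
    rw [fromBlocks_smul, smul_zero]
  obtain ⟨X, hX⟩ := exp_fromBlocks_zero₂₁ (δ • -Aᵀ) (δ • Q) (δ • A)
  have h₂₂ : (exp (δ • fromBlocks (-Aᵀ) Q 0 A)).toBlocks₂₂ = expM (δ • A) := by
    rw [hG, hX, toBlocks_fromBlocks₂₂, expM]
  refine ⟨by rw [hG, hX, toBlocks_fromBlocks₂₁], ?_, h₂₂, ?_⟩
  · rw [hG, hX, toBlocks_fromBlocks₁₁, expM, smul_neg, neg_smul]
  · have h := exp_neg_smul_mul_toBlocks₁₂_exp_smul_fromBlocks (-Aᵀ) Q A δ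
    simp only [neg_smul_neg, exp_transpose, ← transpose_smul] at h
    simpa only [h₂₂, expM] using h

/-- block matrix exponential identity, Eq. (26)–(29): with
`G = [[−Aᵀ, Q], [0, A]]` and `Z = exp(δ G)` written in `n×n` blocks, we have `Z₂₁ = 0`,
`Z₁ = exp(−δ Aᵀ)`, `Z₃ = exp(δ A)` and `Z₃ᵀ Z₂ = ∫_0^δ exp(η A)ᵀ Q exp(η A) dη`. -/
theorem stmt12 {n : ℕ} (A Q : Matrix (Fin n) (Fin n) ℝ) (δ : ℝ) (hδ : 0 ≤ δ) :
    (NormedSpace.exp (δ • Matrix.fromBlocks (-Aᵀ) Q 0 A)).toBlocks₂₁ = 0 ∧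
    (NormedSpace.exp (δ • Matrix.fromBlocks (-Aᵀ) Q 0 A)).toBlocks₁₁ = expM ((-δ) • Aᵀ) ∧
    (NormedSpace.exp (δ • Matrix.fromBlocks (-Aᵀ) Q 0 A)).toBlocks₂₂ = expM (δ • A) ∧
    ((NormedSpace.exp (δ • Matrix.fromBlocks (-Aᵀ) Q 0 A)).toBlocks₂₂)ᵀ *
        (NormedSpace.exp (δ • Matrix.fromBlocks (-Aᵀ) Q 0 A)).toBlocks₁₂ =
      Matrix.of fun k l => ∫ η in (0:ℝ)..δ, ((expM (η • A))ᵀ * Q * expM (η • A)) k l :=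
  stmt12_general A Q δ
end
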